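/- The optimal value is Lipschitz in the communication cost: for all reals λ, μ, the unique bounded fixed points V_λ, V_μ of T_λ, T_μ satisfy sup_{b ∈ Δ} |V_λ(b) − V_μ(b)| ≤ |λ − μ| · (max_{a ∈ A} m a) / (1 − β). -/
import Mathlib


open Finset

/-- A belief over a finite state space: a nonnegative function summing to one. -/
def IsBelief {S : Type} [Fintype S] (b : S → ℝ) : Prop :=
  (∀ s, 0 ≤ b s) ∧ ∑ s, b s = 1

/-- The set of beliefs, as a subtype. -/
def Belief (S : Type) [Fintype S] : Type := {b : S → ℝ // IsBelief b}

/-- Probability of observation `o` under action `a` starting from belief `b`: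
`σ(b,a,o) = Σ_s Σ_{s'} b s · P a s s' · Q a s' o`. -/
noncomputable def obsProb {S A O : Type} [Fintype S] [Fintype A] [Fintype O]
    (P : A → S → S → ℝ) (Q : A → S → O → ℝ) (b : Belief S) (a : A) (o : O) : ℝ :=
  ∑ s, ∑ s', b.1 s * P a s s' * Q a s' o

/-- The Bayes posterior belief `τ(b,a,o)`; equal to the fixed belief `b₀` when
`σ(b,a,o) = 0`. -/
noncomputable def bayesTau {S A O : Type} [Fintype S] [Fintype A] [Fintype O]
    (P : A → S → S → ℝ) (hP0 : ∀ a s s', 0 ≤ P a s s')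
    (Q : A → S → O → ℝ) (hQ0 : ∀ a s' o, 0 ≤ Q a s' o)
    (b₀ : Belief S) (b : Belief S) (a : A) (o : O) : Belief S :=
  if h : 0 < obsProb P Q b a o then
    ⟨fun s' => (∑ s, b.1 s * P a s s' * Q a s' o) / obsProb P Q b a o, by
      constructor
      · intro s'
        apply div_nonneg _ (le_of_lt h)
        exact Finset.sum_nonneg fun s _ =>
          mul_nonneg (mul_nonneg (b.2.1 s) (hP0 a s s')) (hQ0 a s' o)
      · rw [← Finset.sum_div, div_eq_one_iff_eq (ne_of_gt h), obsProb, Finset.sum_comm]⟩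
  else b₀

/-- The coordinator's Bellman operator:
`(T V)(b) = min_a [ Σ_s b s · c a s + β · Σ_o σ(b,a,o) · V(τ(b,a,o)) ]`. -/
noncomputable def bellmanOp {S A O : Type} [Fintype S] [Fintype A] [Fintype O] [Nonempty A]
    (P : A → S → S → ℝ) (hP0 : ∀ a s s', 0 ≤ P a s s')
    (Q : A → S → O → ℝ) (hQ0 : ∀ a s' o, 0 ≤ Q a s' o)
    (c : A → S → ℝ) (β : ℝ) (b₀ : Belief S)
    (V : Belief S → ℝ) (b : Belief S) : ℝ :=
  Finset.univ.inf' Finset.univ_nonempty fun a =>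
    (∑ s, b.1 s * c a s) +
      β * ∑ o, obsProb P Q b a o * V (bayesTau P hP0 Q hQ0 b₀ b a o)



lemma obsProb_nonneg {S A O : Type} [Fintype S] [Fintype A] [Fintype O]
    (P : A → S → S → ℝ) (hP0 : ∀ a s s', 0 ≤ P a s s')
    (Q : A → S → O → ℝ) (hQ0 : ∀ a s' o, 0 ≤ Q a s' o)
    (b : Belief S) (a : A) (o : O) : 0 ≤ obsProb P Q b a o :=
  Finset.sum_nonneg fun s _ => Finset.sum_nonneg fun s' _ =>
    mul_nonneg (mul_nonneg (b.2.1 s) (hP0 a s s')) (hQ0 a s' o)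

lemma sum_obsProb {S A O : Type} [Fintype S] [Fintype A] [Fintype O]
    (P : A → S → S → ℝ) (hP1 : ∀ a s, ∑ s', P a s s' = 1)
    (Q : A → S → O → ℝ) (hQ1 : ∀ a s', ∑ o, Q a s' o = 1)
    (b : Belief S) (a : A) : ∑ o, obsProb P Q b a o = 1 := by
  unfold obsProb
  rw [Finset.sum_comm]
  have h1 : ∀ s, ∑ o, ∑ s', b.1 s * P a s s' * Q a s' o = b.1 s := by
    intro s
    rw [Finset.sum_comm]
    have : ∀ s' ∈ Finset.univ, ∑ o, b.1 s * P a s s' * Q a s' o = b.1 s * P a s s' := by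
      intro s' _
      rw [← Finset.mul_sum, hQ1, mul_one]
    rw [Finset.sum_congr rfl this, ← Finset.mul_sum, hP1, mul_one]
  rw [Finset.sum_congr rfl fun s _ => h1 s, b.2.2]

lemma inf'_le_inf'_add {α : Type*} (s : Finset α) (hs : s.Nonempty) (f g : α → ℝ) (K : ℝ)
    (h : ∀ a ∈ s, f a ≤ g a + K) : s.inf' hs f ≤ s.inf' hs g + K := by
  obtain ⟨a, ha, hag⟩ := s.exists_mem_eq_inf' hs g
  calc s.inf' hs f ≤ f a := Finset.inf'_le _ ha
    _ ≤ g a + K := h a ha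
    _ = s.inf' hs g + K := by rw [hag]


/-- The optimal value is Lipschitz in the communication cost: the unique bounded fixed
points `Vl`, `Vm` of the Bellman operators with stage costs `c a s + λ · m a` and
`c a s + μ · m a` satisfy
`sup_b |Vl b − Vm b| ≤ |λ − μ| · (max_a m a) / (1 − β)`. -/
theorem value_lipschitz_in_comm_cost {S A O : Type} [Fintype S] [Fintype A] [Fintype O]
    [Nonempty S] [Nonempty A] [Nonempty O]
    (P : A → S → S → ℝ) (hP0 : ∀ a s s', 0 ≤ P a s s')
    (hP1 : ∀ a s, ∑ s', P a s s' = 1)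
    (Q : A → S → O → ℝ) (hQ0 : ∀ a s' o, 0 ≤ Q a s' o)
    (hQ1 : ∀ a s', ∑ o, Q a s' o = 1)
    (c : A → S → ℝ) (m : A → ℝ) (hm : ∀ a, 0 ≤ m a)
    (β : ℝ) (hβ0 : 0 ≤ β) (hβ1 : β < 1) (b₀ : Belief S)
    (lam mu : ℝ)
    (Vl Vm : Belief S → ℝ)
    (hVlB : ∃ M, ∀ b, |Vl b| ≤ M) (hVmB : ∃ M, ∀ b, |Vm b| ≤ M)
    (hVl : bellmanOp P hP0 Q hQ0 (fun a s => c a s + lam * m a) β b₀ Vl = Vl)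
    (hVlU : ∀ W : Belief S → ℝ, (∃ M, ∀ b, |W b| ≤ M) →
      bellmanOp P hP0 Q hQ0 (fun a s => c a s + lam * m a) β b₀ W = W → W = Vl)
    (hVm : bellmanOp P hP0 Q hQ0 (fun a s => c a s + mu * m a) β b₀ Vm = Vm)
    (hVmU : ∀ W : Belief S → ℝ, (∃ M, ∀ b, |W b| ≤ M) →
      bellmanOp P hP0 Q hQ0 (fun a s => c a s + mu * m a) β b₀ W = W → W = Vm) :
    ⨆ b : Belief S, |Vl b - Vm b|
      ≤ |lam - mu| * (Finset.univ.sup' Finset.univ_nonempty m) / (1 - β) := by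
  haveI : Nonempty (Belief S) := ⟨b₀⟩
  obtain ⟨Ml, hMl⟩ := hVlB
  obtain ⟨Mm, hMm⟩ := hVmB
  set d := ⨆ b : Belief S, |Vl b - Vm b| with hd
  set mmax := Finset.univ.sup' Finset.univ_nonempty m with hmmax
  set K := |lam - mu| * mmax with hK
  have hbdd : BddAbove (Set.range fun b : Belief S => |Vl b - Vm b|) := by
    refine ⟨Ml + Mm, ?_⟩
    rintro x ⟨b, rfl⟩
    calc |Vl b - Vm b| ≤ |Vl b| + |Vm b| := abs_sub _ _
    _ ≤ Ml + Mm := add_le_add (hMl b) (hMm b)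
  have hle_d : ∀ b : Belief S, |Vl b - Vm b| ≤ d :=
    fun b => le_ciSup hbdd b
  have hd0 : 0 ≤ d := le_trans (abs_nonneg _) (hle_d (Classical.arbitrary _))
  have hK0 : 0 ≤ K := by
    apply mul_nonneg (abs_nonneg _)
    calc (0:ℝ) ≤ m (Classical.arbitrary A) := hm _
    _ ≤ mmax := Finset.le_sup' m (Finset.mem_univ _)
  -- key pointwise bound on the per-action terms
  have key : ∀ (a : A) (b : Belief S),
      |((∑ s, b.1 s * (c a s + lam * m a)) +
        β * ∑ o, obsProb P Q b a o * Vl (bayesTau P hP0 Q hQ0 b₀ b a o)) -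
       ((∑ s, b.1 s * (c a s + mu * m a)) +
        β * ∑ o, obsProb P Q b a o * Vm (bayesTau P hP0 Q hQ0 b₀ b a o))| ≤ K + β * d := by
    intro a b
    have h1 : (∑ s, b.1 s * (c a s + lam * m a)) - (∑ s, b.1 s * (c a s + mu * m a))
        = (lam - mu) * m a := by
      rw [← Finset.sum_sub_distrib]
      have : ∀ s ∈ Finset.univ, b.1 s * (c a s + lam * m a) - b.1 s * (c a s + mu * m a)
          = b.1 s * ((lam - mu) * m a) := fun s _ => by ring
      rw [Finset.sum_congr rfl this, ← Finset.sum_mul, b.2.2, one_mul]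
    have h2 : (β * ∑ o, obsProb P Q b a o * Vl (bayesTau P hP0 Q hQ0 b₀ b a o)) -
        (β * ∑ o, obsProb P Q b a o * Vm (bayesTau P hP0 Q hQ0 b₀ b a o))
        = β * ∑ o, obsProb P Q b a o *
            (Vl (bayesTau P hP0 Q hQ0 b₀ b a o) - Vm (bayesTau P hP0 Q hQ0 b₀ b a o)) := by
      rw [← mul_sub, ← Finset.sum_sub_distrib]
      congr 1
      exact Finset.sum_congr rfl fun o _ => by ring
    have h3 : |∑ o, obsProb P Q b a o *
        (Vl (bayesTau P hP0 Q hQ0 b₀ b a o) - Vm (bayesTau P hP0 Q hQ0 b₀ b a o))| ≤ d := by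
      calc |∑ o, obsProb P Q b a o *
            (Vl (bayesTau P hP0 Q hQ0 b₀ b a o) - Vm (bayesTau P hP0 Q hQ0 b₀ b a o))|
          ≤ ∑ o, |obsProb P Q b a o *
            (Vl (bayesTau P hP0 Q hQ0 b₀ b a o) - Vm (bayesTau P hP0 Q hQ0 b₀ b a o))| :=
            Finset.abs_sum_le_sum_abs _ _
        _ ≤ ∑ o, obsProb P Q b a o * d := by
            apply Finset.sum_le_sum
            intro o _
            rw [abs_mul, abs_of_nonneg (obsProb_nonneg P hP0 Q hQ0 b a o)]
            exact mul_le_mul_of_nonneg_left (hle_d _) (obsProb_nonneg P hP0 Q hQ0 b a o)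
        _ = d := by rw [← Finset.sum_mul, sum_obsProb P hP1 Q hQ1 b a, one_mul]
    have habs1 : |(lam - mu) * m a| ≤ K := by
      rw [abs_mul, abs_of_nonneg (hm a)]
      exact mul_le_mul_of_nonneg_left (Finset.le_sup' m (Finset.mem_univ a)) (abs_nonneg _)
    calc |((∑ s, b.1 s * (c a s + lam * m a)) +
        β * ∑ o, obsProb P Q b a o * Vl (bayesTau P hP0 Q hQ0 b₀ b a o)) -
       ((∑ s, b.1 s * (c a s + mu * m a)) +
        β * ∑ o, obsProb P Q b a o * Vm (bayesTau P hP0 Q hQ0 b₀ b a o))|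
        = |(lam - mu) * m a + β * ∑ o, obsProb P Q b a o *
            (Vl (bayesTau P hP0 Q hQ0 b₀ b a o) - Vm (bayesTau P hP0 Q hQ0 b₀ b a o))| := by
          rw [← h1, ← h2]; congr 1; ring
      _ ≤ |(lam - mu) * m a| + |β * ∑ o, obsProb P Q b a o *
            (Vl (bayesTau P hP0 Q hQ0 b₀ b a o) - Vm (bayesTau P hP0 Q hQ0 b₀ b a o))| :=
          abs_add_le _ _
      _ ≤ K + β * d := by
          apply add_le_add habs1
          rw [abs_mul, abs_of_nonneg hβ0]
          exact mul_le_mul_of_nonneg_left h3 hβ0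
  -- pointwise bound on the value difference
  have hpt : ∀ b : Belief S, |Vl b - Vm b| ≤ K + β * d := by
    intro b
    have hVlb : Vl b = bellmanOp P hP0 Q hQ0 (fun a s => c a s + lam * m a) β b₀ Vl b :=
      (congrFun hVl b).symm
    have hVmb : Vm b = bellmanOp P hP0 Q hQ0 (fun a s => c a s + mu * m a) β b₀ Vm b :=
      (congrFun hVm b).symm
    rw [hVlb, hVmb, bellmanOp, bellmanOp, abs_sub_le_iff]
    constructor
    · apply sub_le_iff_le_add.mpr
      rw [add_comm]
      apply inf'_le_inf'_add
      intro a _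
      have := key a b
      rw [abs_le] at this
      linarith [this.2]
    · apply sub_le_iff_le_add.mpr
      rw [add_comm]
      apply inf'_le_inf'_add
      intro a _
      have := key a b
      rw [abs_le] at this
      linarith [this.1]
  have hdle : d ≤ K + β * d := ciSup_le hpt
  rw [le_div_iff₀ (by linarith : (0:ℝ) < 1 - β)]
  calc d * (1 - β) = d - β * d := by ring
    _ ≤ K := by linarith
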